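/- arXiv:2304.11759 — 4 statements merged into one kernel-verified Lean document; each statement's English description precedes it below -/
import Mathlib

section
/- Let X be a field and α, β, γ ∈ X with β ≠ 0. Then the groupoid (X,*) with x*y := α + βx + γy is a right feeble group. -/
theorem stmt2 {X : Type*} [Field X] (α β γ : X) (hβ : β ≠ 0)
    (op : X → X → X) (hop : ∀ x y, op x y = α + β * x + γ * y) :
    (∀ x y : X, ∃ a b : X, op a x = y ∧ op b y = x) ∧
    (∀ x y z : X, ∃ w : X, op x (op y z) = op w z) := by
  constructor
  · intro x y
    refine ⟨(y - α - γ * x) / β, (x - α - γ * y) / β, ?_, ?_⟩ <;>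
      simp only [hop] <;> field_simp <;> ring
  · intro x y z
    refine ⟨(β * x + γ * α + γ * β * y + γ * γ * z - γ * z) / β, ?_⟩
    simp only [hop]; field_simp; ring
end

section
/- Let φ: X → X be a surjective function and define x*y := φ(x). Then the leftoid (X,*) is a right feeble group. -/
theorem stmt4 {X : Type*} (φ : X → X) (hφ : Function.Surjective φ)
    (op : X → X → X) (hop : ∀ x y, op x y = φ x) :
    (∀ x y : X, ∃ a b : X, op a x = y ∧ op b y = x) ∧
    (∀ x y z : X, ∃ w : X, op x (op y z) = op w z) := by
  constructor
  · intro x y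
    obtain ⟨a, ha⟩ := hφ y
    obtain ⟨b, hb⟩ := hφ x
    exact ⟨a, b, by rw [hop, ha], by rw [hop, hb]⟩
  · intro x y z
    exact ⟨x, by rw [hop, hop]⟩
end

section
/- If (X,*) is a right feeble group and f: (X,*) → (Y,•) is a surjective groupoid homomorphism (f(a*b) = f(a)•f(b)), then (Y,•) is a right feeble group. -/
theorem stmt6 {X Y : Type*} (mul : X → X → X) (bull : Y → Y → Y)
    (f : X → Y) (hf : Function.Surjective f)
    (hhom : ∀ a b : X, f (mul a b) = bull (f a) (f b))
    (h1 : ∀ x y : X, ∃ a b : X, mul a x = y ∧ mul b y = x)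
    (h2 : ∀ x y z : X, ∃ w : X, mul x (mul y z) = mul w z) :
    (∀ x y : Y, ∃ a b : Y, bull a x = y ∧ bull b y = x) ∧
    (∀ x y z : Y, ∃ w : Y, bull x (bull y z) = bull w z) := by
  constructor
  · intro x y
    obtain ⟨x', rfl⟩ := hf x
    obtain ⟨y', rfl⟩ := hf y
    obtain ⟨a, b, ha, hb⟩ := h1 x' y'
    exact ⟨f a, f b, by rw [← hhom, ha], by rw [← hhom, hb]⟩
  · intro x y z
    obtain ⟨x', rfl⟩ := hf x
    obtain ⟨y', rfl⟩ := hf y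
    obtain ⟨z', rfl⟩ := hf z
    obtain ⟨w, hw⟩ := h2 x' y' z'
    exact ⟨f w, by rw [← hhom, ← hhom, hw, hhom]⟩
end

section
/- Let (X,*) be a right feeble group and (A,*) a divisible subgroupoid of (X,*). Then (A,*) is a right feeble group. -/
theorem stmt9 {X : Type*} (op : X → X → X) (A : Set X)
    (hclosed : ∀ x ∈ A, ∀ y ∈ A, op x y ∈ A)
    (hdiv : ∀ a : X, ∀ x ∈ A, ∀ y ∈ A, op a x = y → a ∈ A)
    (h1 : ∀ x y : X, ∃ a b : X, op a x = y ∧ op b y = x)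
    (h2 : ∀ x y z : X, ∃ w : X, op x (op y z) = op w z) :
    (∀ x ∈ A, ∀ y ∈ A, ∃ a ∈ A, ∃ b ∈ A, op a x = y ∧ op b y = x) ∧
    (∀ x ∈ A, ∀ y ∈ A, ∀ z ∈ A, ∃ w ∈ A, op x (op y z) = op w z) := by
  constructor
  · intro x hx y hy
    obtain ⟨a, b, hab, hba⟩ := h1 x y
    exact ⟨a, hdiv a x hx y hy hab, b, hdiv b y hy x hx hba, hab, hba⟩
  · intro x hx y hy z hz
    obtain ⟨w, hw⟩ := h2 x y z
    have : op w z ∈ A := hw ▸ hclosed x hx _ (hclosed y hy z hz)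
    exact ⟨w, hdiv w z hz _ this rfl, hw⟩
end
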